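/- In two-way 2-bootstrap percolation on T_L^d (d ≥ 2, L even, L ≥ 6): if a 2-dimensional hyper-square HS of the tiling (of even parity) has, in some even-round configuration C_t, two occupied outer neighbors (in distinct dimensions), then HS is occupied in C_{t+2}; here a hyper-square of even parity is occupied in an even round iff its even-part is fully black, and one of odd parity iff its odd-part is fully black. -/

import Mathlib

open scoped Classical ENNReal
open MeasureTheory Filter

/-- Vertices of the `d`-dimensional torus with side length `L`. -/
abbrev TorusV (d L : ℕ) := Fin d → ZMod L

/-- The `d`-dimensional torus graph `T_L^d`: two nodes are adjacent iff they differ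
by `±1 (mod L)` in exactly one coordinate. -/
def torusGraph (d L : ℕ) : SimpleGraph (TorusV d L) where
  Adj v u := v ≠ u ∧ ∃ j, (u j = v j + 1 ∨ u j = v j - 1) ∧ ∀ k, k ≠ j → u k = v k
  symm := by
    constructor
    rintro v u ⟨hne, j, hj, hk⟩
    refine ⟨hne.symm, j, ?_, fun k hkj => (hk k hkj).symm⟩
    rcases hj with h | h
    · right; rw [h]; ring
    · left; rw [h]; ring
  loopless := by constructor; rintro v ⟨hne, -⟩; exact hne rfl

/-- One round of two-way `r`-bootstrap percolation on a finite graph: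
a node is black in the next round iff it has at least `r` black neighbors. -/
noncomputable def gStep {V : Type*} [Fintype V] (G : SimpleGraph V) (r : ℕ)
    (C : V → Bool) : V → Bool :=
  fun v => decide (r ≤ (Finset.univ.filter (fun u => G.Adj v u ∧ C u = true)).card)

/-- One round of (ordinary) `r`-bootstrap percolation: black nodes stay black, and a white
node becomes black iff it has at least `r` black neighbors. -/
noncomputable def bpStep {V : Type*} [Fintype V] (G : SimpleGraph V) (r : ℕ)
    (C : V → Bool) : V → Bool :=
  fun v => C v || decide (r ≤ (Finset.univ.filter (fun u => G.Adj v u ∧ C u = true)).card)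

/-- One round of the majority model: each node adopts the most frequent color among its
neighbors, keeping its own color in case of a tie. -/
noncomputable def majStep {V : Type*} [Fintype V] (G : SimpleGraph V)
    (C : V → Bool) : V → Bool :=
  fun v =>
    let b := (Finset.univ.filter (fun u => G.Adj v u ∧ C u = true)).card
    let w := (Finset.univ.filter (fun u => G.Adj v u ∧ C u = false)).card
    if w < b then true else if b < w then false else C v

/-- `S` is an `(r,c)`-robust set in two-way `r`-BP: whenever all nodes of `S` have color `c`,
they keep color `c` in all subsequent configurations. (`true` = black, `false` = white.) -/
noncomputable def isRobust {V : Type*} [Fintype V] (G : SimpleGraph V) (r : ℕ) (c : Bool)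
    (S : Finset V) : Prop :=
  ∀ C : V → Bool, (∀ v ∈ S, C v = c) → ∀ t, ∀ v ∈ S, (gStep G r)^[t] C v = c

/-- `S` is a b-eternal set in two-way `r`-BP: whenever all nodes of `S` are black, every
subsequent configuration contains at least one black node. -/
noncomputable def isBEternal {V : Type*} [Fintype V] (G : SimpleGraph V) (r : ℕ)
    (S : Finset V) : Prop :=
  ∀ C : V → Bool, (∀ v ∈ S, C v = true) → ∀ t, ∃ v, (gStep G r)^[t] C v = true

/-- The node of a hyper-square at start `i` obtained by incrementing the coordinates in `S`. -/
def hsNode {d L : ℕ} (i : TorusV d L) (S : Finset (Fin d)) : TorusV d L :=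
  fun j => if j ∈ S then i j + 1 else i j

/-- The hyper-square with starting node `i` and coordinate set `J` (an `J.card`-dimensional
hyper-square). -/
noncomputable def hyperSquare {d L : ℕ} (i : TorusV d L) (J : Finset (Fin d)) :
    Finset (TorusV d L) :=
  J.powerset.image (hsNode i)

/-- The even-part of the hyper-square: nodes differing from the start in an even number of
coordinates. -/
noncomputable def evenPart {d L : ℕ} (i : TorusV d L) (J : Finset (Fin d)) :
    Finset (TorusV d L) :=
  (J.powerset.filter (fun S => Even S.card)).image (hsNode i)

/-- The odd-part of the hyper-square: nodes differing from the start in an odd number of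
coordinates. -/
noncomputable def oddPart {d L : ℕ} (i : TorusV d L) (J : Finset (Fin d)) :
    Finset (TorusV d L) :=
  (J.powerset.filter (fun S => Odd S.card)).image (hsNode i)

/-- The hyper-rectangle of size `l 0 × ⋯ × l (d-1)` starting at node `i`. -/
noncomputable def hyperRect {d L : ℕ} [NeZero L] (i : TorusV d L) (l : Fin d → ℕ) :
    Finset (TorusV d L) :=
  Finset.univ.filter (fun v => ∀ j, ∃ m : ℕ, m ≤ l j ∧ v j = i j + (m : ZMod L))

/-- The parity of a hyper-square of the tiling: parity of the sum of the last `d - r`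
coordinates of its starting node. -/
def tpar (d L r : ℕ) (i : TorusV d L) : ℕ :=
  (∑ j ∈ Finset.univ.filter (fun j : Fin d => r ≤ (j : ℕ)), (i j).val) % 2

/-- A hyper-square of the tiling (start `i`, coordinate set = first `r` coordinates) is
occupied: its even-part is fully black if its parity is even, and its odd-part is fully
black if its parity is odd. -/
noncomputable def occupiedHS (d L r : ℕ) (i : TorusV d L) (C : TorusV d L → Bool) : Prop :=
  if tpar d L r i = 0 then
    ∀ v ∈ evenPart i (Finset.univ.filter (fun j : Fin d => (j : ℕ) < r)), C v = true
  else
    ∀ v ∈ oddPart i (Finset.univ.filter (fun j : Fin d => (j : ℕ) < r)), C v = true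

/-- The Bernoulli measure on `Bool` with success (black) probability `p` (clamped to `1`). -/
noncomputable def bernoulliMeasure (p : ℝ≥0∞) : Measure Bool :=
  (PMF.bernoulli (min p 1).toNNReal (by
    rw [← ENNReal.coe_le_coe, ENNReal.coe_toNNReal
      (ne_top_of_le_ne_top ENNReal.one_ne_top (min_le_right _ _))]
    exact le_of_le_of_eq (min_le_right _ _) ENNReal.coe_one.symm)).toMeasure

/-- The product measure on configurations: each node is independently black with
probability `p`. -/
noncomputable def productMeasure (V : Type*) [Fintype V] (p : ℝ≥0∞) :
    Measure (V → Bool) :=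
  Measure.pi (fun _ : V => bernoulliMeasure p)

/-!
The odd-part of `HS` sees each occupied outer neighbour through one edge per node: the node of
the outer neighbour with the same offset inside the square. Two occupied outer neighbours in
distinct directions give every odd node two distinct black neighbours, so the odd-part is black
after one round. Every node of a square of dimension at least two is adjacent to two distinct
nodes of the opposite part (flip one of two in-square coordinates), so the even-part is black
one round later.
-/

open Function
open scoped symmDiff

lemma gStep_two_eq_true_of_adj {V : Type*} [Fintype V] (G : SimpleGraph V) (C : V → Bool)
    {v u₁ u₂ : V} (hne : u₁ ≠ u₂) (h₁ : G.Adj v u₁) (h₂ : G.Adj v u₂)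
    (hC₁ : C u₁ = true) (hC₂ : C u₂ = true) : gStep G 2 C v = true := by
  refine decide_eq_true ?_
  calc 2 = ({u₁, u₂} : Finset V).card := (Finset.card_pair hne).symm
    _ ≤ _ := Finset.card_le_card fun x hx => by
        rcases Finset.mem_insert.mp hx with rfl | hx
        · simp [h₁, hC₁]
        · rw [Finset.mem_singleton.mp hx]; simp [h₂, hC₂]

lemma Finset.symmDiff_singleton_of_mem {α : Type*} [DecidableEq α] {S : Finset α} {a : α}
    (ha : a ∈ S) : S ∆ {a} = S.erase a := by
  ext; simp [Finset.mem_symmDiff]; grind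

lemma Finset.symmDiff_singleton_of_notMem {α : Type*} [DecidableEq α] {S : Finset α} {a : α}
    (ha : a ∉ S) : S ∆ {a} = insert a S := by
  ext; simp [Finset.mem_symmDiff]; grind

section Torus

variable {d L : ℕ}

lemma torusGraph_adj_update_add [Nontrivial (ZMod L)] (v : TorusV d L) (j : Fin d)
    {s : ZMod L} (hs : s = 1 ∨ s = -1) : (torusGraph d L).Adj v (update v j (v j + s)) := by
  have hs0 : s ≠ 0 := by rcases hs with rfl | rfl <;> simp
  refine ⟨fun h => hs0 ?_, j, ?_, fun k hk => update_of_ne hk _ _⟩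
  · simpa using congrFun h j
  · rcases hs with rfl | rfl <;> simp [sub_eq_add_neg]

lemma update_add_ne_update_add [Nontrivial (ZMod L)] (v : TorusV d L) {j₁ j₂ : Fin d}
    (hj : j₁ ≠ j₂) {s₁ : ZMod L} (hs₁ : s₁ ≠ 0) (s₂ : ZMod L) :
    update v j₁ (v j₁ + s₁) ≠ update v j₂ (v j₂ + s₂) := fun h =>
  hs₁ (by simpa [update_of_ne hj] using congrFun h j₁)

lemma hsNode_injective [Nontrivial (ZMod L)] (i : TorusV d L) : Injective (hsNode i) := by
  intro S T h
  ext j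
  have := congrFun h j
  by_cases hS : j ∈ S <;> by_cases hT : j ∈ T <;> simp_all [hsNode]

lemma hsNode_update (i : TorusV d L) {j : Fin d} (x : ZMod L) {S : Finset (Fin d)}
    (hj : j ∉ S) : hsNode (update i j x) S = update (hsNode i S) j x := by
  funext k
  by_cases hk : k = j
  · subst hk; simp [hsNode, hj]
  · simp [hsNode, update_of_ne hk]

lemma hsNode_insert (i : TorusV d L) {j : Fin d} {S : Finset (Fin d)} (hj : j ∉ S) :
    hsNode i (insert j S) = update (hsNode i S) j (hsNode i S j + 1) := by
  funext k
  by_cases hk : k = j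
  · subst hk; simp [hsNode, hj]
  · simp [hsNode, hk]

lemma torusGraph_adj_hsNode_symmDiff [Nontrivial (ZMod L)] (i : TorusV d L)
    (S : Finset (Fin d)) (j : Fin d) :
    (torusGraph d L).Adj (hsNode i S) (hsNode i (S ∆ {j})) := by
  by_cases hj : j ∈ S
  · rw [Finset.symmDiff_singleton_of_mem hj]
    nth_rw 1 [← Finset.insert_erase hj]
    rw [hsNode_insert i (Finset.notMem_erase j S)]
    exact (torusGraph_adj_update_add _ j (Or.inl rfl)).symm
  · rw [Finset.symmDiff_singleton_of_notMem hj, hsNode_insert i hj]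
    exact torusGraph_adj_update_add _ j (Or.inl rfl)

lemma odd_card_symmDiff_singleton {S : Finset (Fin d)} (hS : Even S.card) (j : Fin d) :
    Odd (S ∆ {j}).card := by
  by_cases hj : j ∈ S
  · rw [Finset.symmDiff_singleton_of_mem hj, Finset.card_erase_of_mem hj]
    exact Nat.Even.sub_odd (Finset.card_pos.mpr ⟨j, hj⟩) hS odd_one
  · rw [Finset.symmDiff_singleton_of_notMem hj, Finset.card_insert_of_notMem hj]
    exact hS.add_one

variable [NeZero L]

theorem oddPart_gStep_of_outer_neighbors [Nontrivial (ZMod L)] {i : TorusV d L}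
    {J : Finset (Fin d)} {j₁ j₂ : Fin d} (hj₁ : j₁ ∉ J) (hj₂ : j₂ ∉ J) (hj : j₁ ≠ j₂)
    {s₁ s₂ : ZMod L} (hs₁ : s₁ = 1 ∨ s₁ = -1) (hs₂ : s₂ = 1 ∨ s₂ = -1)
    {C : TorusV d L → Bool}
    (hC₁ : ∀ v ∈ oddPart (update i j₁ (i j₁ + s₁)) J, C v = true)
    (hC₂ : ∀ v ∈ oddPart (update i j₂ (i j₂ + s₂)) J, C v = true) :
    ∀ v ∈ oddPart i J, gStep (torusGraph d L) 2 C v = true := by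
  simp only [oddPart, Finset.mem_image, Finset.mem_filter, Finset.mem_powerset] at hC₁ hC₂ ⊢
  rintro _ ⟨S, hS, rfl⟩
  have hj₁S : j₁ ∉ S := fun h => hj₁ (hS.1 h)
  have hj₂S : j₂ ∉ S := fun h => hj₂ (hS.1 h)
  have hi₁ : i j₁ = hsNode i S j₁ := by simp [hsNode, hj₁S]
  have hi₂ : i j₂ = hsNode i S j₂ := by simp [hsNode, hj₂S]
  have hs₁0 : s₁ ≠ 0 := by rcases hs₁ with rfl | rfl <;> simp
  refine gStep_two_eq_true_of_adj _ C (update_add_ne_update_add _ hj hs₁0 s₂)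
    (torusGraph_adj_update_add _ j₁ hs₁) (torusGraph_adj_update_add _ j₂ hs₂) ?_ ?_
  · exact hC₁ _ ⟨S, hS, by rw [hsNode_update i _ hj₁S, hi₁]⟩
  · exact hC₂ _ ⟨S, hS, by rw [hsNode_update i _ hj₂S, hi₂]⟩

theorem evenPart_gStep_of_oddPart [Nontrivial (ZMod L)] {i : TorusV d L}
    {J : Finset (Fin d)} (hJ : 1 < J.card) {C : TorusV d L → Bool}
    (hC : ∀ v ∈ oddPart i J, C v = true) :
    ∀ v ∈ evenPart i J, gStep (torusGraph d L) 2 C v = true := by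
  obtain ⟨j₁, hj₁, j₂, hj₂, hj⟩ := Finset.one_lt_card.mp hJ
  simp only [evenPart, oddPart, Finset.mem_image, Finset.mem_filter, Finset.mem_powerset]
    at hC ⊢
  rintro _ ⟨S, ⟨hSJ, hS⟩, rfl⟩
  have hflip : ∀ j ∈ J, C (hsNode i (S ∆ {j})) = true := fun j hj =>
    hC _ ⟨_, ⟨Finset.symmDiff_subset_union.trans (Finset.union_subset hSJ (by simpa using hj)),
      odd_card_symmDiff_singleton hS j⟩, rfl⟩
  refine gStep_two_eq_true_of_adj _ C ?_ (torusGraph_adj_hsNode_symmDiff i S j₁)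
    (torusGraph_adj_hsNode_symmDiff i S j₂) (hflip j₁ hj₁) (hflip j₂ hj₂)
  exact fun h => hj (Finset.singleton_inj.mp (symmDiff_right_inj.mp (hsNode_injective i h)))

end Torus

theorem stmt_17_general (d L : ℕ) [NeZero L] (hd : 2 ≤ d) (hL : 6 ≤ L)
    (i : TorusV d L)
    (j1 j2 : Fin d) (h1 : 2 ≤ (j1 : ℕ)) (h2 : 2 ≤ (j2 : ℕ)) (hj : j1 ≠ j2)
    (s1 s2 : ZMod L) (hs1 : s1 = 1 ∨ s1 = -1) (hs2 : s2 = 1 ∨ s2 = -1)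
    (C : TorusV d L → Bool)
    (hocc1 : ∀ v ∈ oddPart (Function.update i j1 (i j1 + s1))
      (Finset.univ.filter (fun j : Fin d => (j : ℕ) < 2)), C v = true)
    (hocc2 : ∀ v ∈ oddPart (Function.update i j2 (i j2 + s2))
      (Finset.univ.filter (fun j : Fin d => (j : ℕ) < 2)), C v = true) :
    ∀ v ∈ evenPart i (Finset.univ.filter (fun j : Fin d => (j : ℕ) < 2)),
      (gStep (torusGraph d L) 2)^[2] C v = true := by
  have : Fact (1 < L) := ⟨by omega⟩
  have hJ : 1 < (Finset.univ.filter (fun j : Fin d => (j : ℕ) < 2)).card :=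
    Finset.one_lt_card.mpr ⟨⟨0, by omega⟩, by simp, ⟨1, by omega⟩, by simp, by simp⟩
  have hodd := oddPart_gStep_of_outer_neighbors (by simpa using h1.not_gt)
    (by simpa using h2.not_gt) hj hs1 hs2 hocc1 hocc2
  exact evenPart_gStep_of_oddPart hJ hodd

theorem stmt_17 (d L : ℕ) [NeZero L] (hd : 2 ≤ d) (hL : 6 ≤ L) (hLe : Even L)
    (i : TorusV d L) (hi : ∀ j : Fin d, (j : ℕ) < 2 → Odd (i j).val)
    (hpar : tpar d L 2 i = 0)
    (j1 j2 : Fin d) (h1 : 2 ≤ (j1 : ℕ)) (h2 : 2 ≤ (j2 : ℕ)) (hj : j1 ≠ j2)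
    (s1 s2 : ZMod L) (hs1 : s1 = 1 ∨ s1 = -1) (hs2 : s2 = 1 ∨ s2 = -1)
    (C : TorusV d L → Bool)
    (hocc1 : ∀ v ∈ oddPart (Function.update i j1 (i j1 + s1))
      (Finset.univ.filter (fun j : Fin d => (j : ℕ) < 2)), C v = true)
    (hocc2 : ∀ v ∈ oddPart (Function.update i j2 (i j2 + s2))
      (Finset.univ.filter (fun j : Fin d => (j : ℕ) < 2)), C v = true) :
    ∀ v ∈ evenPart i (Finset.univ.filter (fun j : Fin d => (j : ℕ) < 2)),
      (gStep (torusGraph d L) 2)^[2] C v = true :=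
  stmt_17_general d L hd hL i j1 j2 h1 h2 hj s1 s2 hs1 hs2 C hocc1 hocc2
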